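/- arXiv:2409.19061 — 2 statements merged into one kernel-verified Lean document; each statement's English description precedes it below -/
import Mathlib

section
/- If a simplicial set X is upper 2-Segal, then the square with top s_1 : X_1 → X_2, left d_0 : X_1 → X_0, right d_0 : X_2 → X_1, bottom s_0 : X_0 → X_1 is a pullback of sets. -/
/-! The top map `s₁` has the retraction `d₂`, so only existence needs an argument: for
`b ∈ X₂` with `d₀ b = s₀ c` one must show `s₁ d₂ b = b`. The simplices `s₁ b` and `s₂ b` of `X₃`
have the same `d₂`-face `b` and, by the degeneracy of `d₀ b`, the same `d₀`-face; the upper 2-Segal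
square for `n = 2`, `i = 1` therefore identifies them, and applying `d₃` gives `s₁ d₂ b = b`. -/

open CategoryTheory Simplicial

universe u

/-- A commuting square of sets (top `f`, left `g`, right `h`, bottom `k`) is a pullback
if the canonical map to the fiber product is a bijection. -/
def IsPullbackSet {A B C D : Type u} (f : A → B) (g : A → C) (h : B → D) (k : C → D) : Prop :=
  (∀ a, h (f a) = k (g a)) ∧ ∀ (b : B) (c : C), h b = k c → ∃! a : A, f a = b ∧ g a = c

/-- The upper 2-Segal condition: for every `n ≥ 2` (here `n = m + 2`) and every `0 < i < n`,
the square with top `d_{i+1} : X_{n+1} → X_n`, left `d_0 : X_{n+1} → X_n`,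
right `d_0 : X_n → X_{n-1}`, bottom `d_i : X_n → X_{n-1}` is a pullback. -/
def UpperTwoSegal (X : SSet.{u}) : Prop :=
  ∀ (m i : ℕ), 0 < i → ∀ h2 : i < m + 2,
    IsPullbackSet
      (fun x => X.δ (⟨i + 1, by omega⟩ : Fin (m + 4)) x)
      (fun x => X.δ (0 : Fin (m + 4)) x)
      (fun x => X.δ (0 : Fin (m + 3)) x)
      (fun x => X.δ (⟨i, by omega⟩ : Fin (m + 3)) x)

namespace IsPullbackSet

variable {A B C D : Type u} {f : A → B} {g : A → C} {h : B → D} {k : C → D}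

theorem ext (hpb : IsPullbackSet f g h k) {a a' : A} (hf : f a = f a') (hg : g a = g a') :
    a = a' :=
  (hpb.2 (f a) (g a) (hpb.1 a)).unique ⟨rfl, rfl⟩ ⟨hf.symm, hg.symm⟩

theorem of_leftInverse {r : B → A} (hr : Function.LeftInverse r f)
    (hcomm : ∀ a, h (f a) = k (g a))
    (hsec : ∀ b c, h b = k c → f (r b) = b ∧ g (r b) = c) : IsPullbackSet f g h k :=
  ⟨hcomm, fun b c hbc => ⟨r b, hsec b c hbc, fun a ⟨hab, _⟩ => hab ▸ (hr a).symm⟩⟩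

end IsPullbackSet

namespace UpperTwoSegal

variable {X : SSet.{u}}

theorem σ_two_eq_σ_one (hX : UpperTwoSegal X) {b : X _⦋2⦌} {c : X _⦋0⦌}
    (hbc : X.δ 0 b = X.σ 0 c) : X.σ (2 : Fin 3) b = X.σ 1 b := by
  refine (hX 0 1 one_pos (by omega)).ext (a := X.σ (2 : Fin 3) b) (a' := X.σ 1 b) ?_ ?_
  · exact (SSet.δ_comp_σ_self_apply (2 : Fin 3) b).trans
      (SSet.δ_comp_σ_succ_apply (1 : Fin 3) b).symm
  · calc X.δ (0 : Fin 4) (X.σ 2 b) = X.σ 1 (X.δ 0 b) :=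
          SSet.δ_comp_σ_of_le_apply (i := 0) (j := (1 : Fin 2)) (by decide) b
      _ = X.σ 0 (X.δ 0 b) := by
          rw [hbc]; exact (SSet.σ_comp_σ_apply (i := (0 : Fin 1)) (j := 0) le_rfl c).symm
      _ = X.δ (0 : Fin 4) (X.σ 1 b) :=
          (SSet.δ_comp_σ_of_le_apply (i := 0) (j := (0 : Fin 2)) (by decide) b).symm

theorem σ_one_δ_two_eq_self (hX : UpperTwoSegal X) {b : X _⦋2⦌} {c : X _⦋0⦌}
    (hbc : X.δ 0 b = X.σ 0 c) : X.σ 1 (X.δ (2 : Fin 3) b) = b := by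
  calc X.σ 1 (X.δ (2 : Fin 3) b) = X.δ (3 : Fin 4) (X.σ 1 b) :=
        (SSet.δ_comp_σ_of_gt_apply (i := (2 : Fin 3)) (j := (1 : Fin 2)) (by decide) b).symm
    _ = X.δ (3 : Fin 4) (X.σ 2 b) := by rw [hX.σ_two_eq_σ_one hbc]
    _ = b := SSet.δ_comp_σ_succ_apply (2 : Fin 3) b

end UpperTwoSegal

/-- If `X` is upper 2-Segal, then the square with top `s_1 : X_1 → X_2`,
left `d_0 : X_1 → X_0`, right `d_0 : X_2 → X_1`, bottom `s_0 : X_0 → X_1` is a pullback. -/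
theorem upperTwoSegal_bottom_degeneracy_square (X : SSet.{u}) (h : UpperTwoSegal X) :
    IsPullbackSet
      (fun x => X.σ (1 : Fin 2) x)
      (fun x => X.δ (0 : Fin 2) x)
      (fun x => X.δ (0 : Fin 3) x)
      (fun x => X.σ (0 : Fin 1) x) := by
  refine .of_leftInverse (r := X.δ (2 : Fin 3)) (SSet.δ_comp_σ_succ_apply (1 : Fin 2))
    (SSet.δ_comp_σ_of_le_apply (i := 0) (j := 0) le_rfl)
    fun b c hbc => ⟨h.σ_one_δ_two_eq_self hbc, ?_⟩
  calc X.δ (0 : Fin 2) (X.δ (2 : Fin 3) b) = X.δ 1 (X.δ 0 b) :=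
        SSet.δ_comp_δ_apply (i := (0 : Fin 2)) (j := 1) (by decide) b
    _ = c := by rw [hbc]; exact SSet.δ_comp_σ_succ_apply (0 : Fin 1) c
end

section
/- For every outer face complex A (a presheaf on the wide subcategory Δ_inert of inert maps in Δ), the simplicial set X = j_!A obtained as the left Kan extension of A along (the opposite of) the inclusion j : Δ_inert → Δ is a decomposition space. (Explicitly, X has X_k ≅ Σ_{ℓ_1,…,ℓ_k ∈ ℕ} A_{ℓ_1+⋯+ℓ_k}, with inner face d_i adding ℓ_i and ℓ_{i+1}, outer faces d_0(a, ℓ_1,…,ℓ_k) = (d_⊥^{ℓ_1}a, ℓ_2,…,ℓ_k) and d_k(a, ℓ_1,…,ℓ_k) = (d_⊤^{ℓ_k}a, ℓ_1,…,ℓ_{k-1}), and degeneracies inserting 0 into the list.) -/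
open CategoryTheory Simplicial

universe u

/-- A morphism in the simplex category is *active* if it preserves endpoints. -/
def IsActive {n m : SimplexCategory} (α : n ⟶ m) : Prop :=
  α.toOrderHom 0 = 0 ∧ α.toOrderHom (Fin.last n.len) = Fin.last m.len

/-- A morphism in the simplex category is *inert* if it is distance preserving. -/
def IsInert {n m : SimplexCategory} (α : n ⟶ m) : Prop :=
  ∀ i : Fin n.len, (α.toOrderHom i.succ : ℕ) = (α.toOrderHom i.castSucc : ℕ) + 1

/-- A simplicial set is a decomposition space if it sends every active-inert pushout square
in the simplex category to a pullback square of sets. -/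
def IsDecomposition (X : SSet.{u}) : Prop :=
  ∀ ⦃n m k p : SimplexCategory⦄ (α : n ⟶ m) (ι : n ⟶ k) (θ : m ⟶ p) (φ : k ⟶ p),
    IsActive α → IsInert ι → IsInert θ → IsActive φ → IsPushout α ι θ φ →
    IsPullbackSet (fun x => X.map φ.op x) (fun x => X.map θ.op x)
      (fun x => X.map ι.op x) (fun x => X.map α.op x)

/-- The morphism property of being inert. -/
def inertProp : MorphismProperty SimplexCategory := fun _ _ f => IsInert f

lemma inert_apply_succ {m k : SimplexCategory} (g : m ⟶ k) (hg : IsInert g)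
    {a b : Fin (m.len + 1)} (hab : (a : ℕ) = (b : ℕ) + 1) :
    (g.toOrderHom a : ℕ) = (g.toOrderHom b : ℕ) + 1 := by
  have hb : (b : ℕ) < m.len := by omega
  obtain ⟨c, rfl⟩ : ∃ c : Fin m.len, b = c.castSucc :=
    ⟨⟨(b : ℕ), hb⟩, Fin.ext (by simp)⟩
  obtain rfl : a = c.succ := Fin.ext (by simpa using hab)
  exact hg c

instance : inertProp.IsMultiplicative where
  id_mem n := by
    intro i
    simp [SimplexCategory.id_toOrderHom]
  comp_mem f g hf hg := by
    intro i
    rw [SimplexCategory.comp_toOrderHom]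
    exact inert_apply_succ g hg (hf i)

/-- The wide subcategory `Δ_inert` of the simplex category on the inert morphisms. -/
def DeltaInert := WideSubcategory inertProp

instance : Category DeltaInert :=
  inferInstanceAs (Category (WideSubcategory inertProp))

/-- The inclusion functor `j : Δ_inert → Δ`. -/
def inertInclusion : DeltaInert ⥤ SimplexCategory := wideSubcategoryInclusion inertProp

/-!
Every morphism of `Δ` factors uniquely as an active map followed by an inert one. Hence `j_! A`
has the explicit model `X_n = Σ_{α : ⦋n⦌ ⟶ ⦋q⦌ active} A_q`, on which `β` acts by factoring
`β ≫ α = e ≫ g` and sending `(α, a)` to `(e, g^* a)`.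

Given `(χ, b) ∈ X_k` and `(ρ, c) ∈ X_m` with the same image in `X_n`, the factorization of
`ι ≫ χ` reads `α ≫ ρ ≫ g = ι ≫ χ` with `g` inert and `c = g^* b`, so the pushout yields
`ψ : p ⟶ q_k` with `φ ≫ ψ = χ` and `θ ≫ ψ = ρ ≫ g`; `ψ` is active since `φ` and `χ` are, and
`(ψ, b)` is the required simplex of `X_p`. It is unique by the pushout property, because an
inert map is determined by its precomposite with an active map.
-/

lemma isPullbackSet_iff_isPullback {A B C D : Type u} (f : A ⟶ B) (g : A ⟶ C) (h : B ⟶ D)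
    (k : C ⟶ D) :
    IsPullbackSet (fun x ↦ f x) (fun x ↦ g x) (fun x ↦ h x) (fun x ↦ k x) ↔ IsPullback f g h k := by
  have hcomm : (∀ a, h (f a) = k (g a)) ↔ f ≫ h = g ≫ k :=
    ⟨fun hw ↦ by ext a; exact hw a, fun hw a ↦ types_congr_hom hw a⟩
  rw [Limits.Types.isPullback_iff, IsPullbackSet, hcomm]
  constructor
  · rintro ⟨hw, H⟩
    exact ⟨hw, fun x y hxy ↦ (H _ _ (types_congr_hom hw y)).unique hxy ⟨rfl, rfl⟩,
      fun b c hbc ↦ (H b c hbc).exists⟩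
  · rintro ⟨hw, hinj, hex⟩
    refine ⟨hw, fun b c hbc ↦ ?_⟩
    obtain ⟨a, ha⟩ := hex b c hbc
    exact ⟨a, ha, fun a' ha' ↦ hinj a' a ⟨ha'.1.trans ha.1.symm, ha'.2.trans ha.2.symm⟩⟩

lemma IsDecomposition.of_iso {X Y : SSet.{u}} (e : X ≅ Y) (hY : IsDecomposition Y) :
    IsDecomposition X := by
  intro n m k p α ι θ φ hα hι hθ hφ hpo
  rw [isPullbackSet_iff_isPullback]
  exact ((isPullbackSet_iff_isPullback _ _ _ _).1 (hY α ι θ φ hα hι hθ hφ hpo)).of_iso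
    (e.app _).symm (e.app _).symm (e.app _).symm (e.app _).symm
    (by simp) (by simp) (by simp) (by simp)

namespace SimplexCategory

variable {n m q : SimplexCategory}

lemma comp_toOrderHom_apply (f : n ⟶ m) (g : m ⟶ q) (i : Fin (n.len + 1)) :
    (f ≫ g).toOrderHom i = g.toOrderHom (f.toOrderHom i) := rfl

lemma hom_ext_of_val {f g : n ⟶ m} (h : ∀ i, (f.toOrderHom i : ℕ) = g.toOrderHom i) : f = g :=
  Hom.ext _ _ (OrderHom.ext _ _ (funext fun i ↦ Fin.ext (h i)))

end SimplexCategory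

section ActiveInert

open SimplexCategory

variable {n m q : SimplexCategory}

lemma IsActive.id (n : SimplexCategory) : IsActive (𝟙 n) := ⟨rfl, rfl⟩

lemma IsActive.comp {f : n ⟶ m} {g : m ⟶ q} (hf : IsActive f) (hg : IsActive g) :
    IsActive (f ≫ g) := by
  constructor <;> simp only [comp_toOrderHom_apply, hf.1, hf.2, hg.1, hg.2]

lemma IsActive.of_comp {f : n ⟶ m} {g : m ⟶ q} (hf : IsActive f) (hfg : IsActive (f ≫ g)) :
    IsActive g := by
  constructor
  · rw [← hf.1, ← comp_toOrderHom_apply, hfg.1]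
  · rw [← hf.2, ← comp_toOrderHom_apply, hfg.2]

lemma IsInert.id (n : SimplexCategory) : IsInert (𝟙 n) := inertProp.id_mem n

lemma IsInert.comp {f : n ⟶ m} {g : m ⟶ q} (hf : IsInert f) (hg : IsInert g) :
    IsInert (f ≫ g) :=
  inertProp.comp_mem f g hf hg

lemma IsInert.val_apply {g : n ⟶ m} (hg : IsInert g) (i : Fin (n.len + 1)) :
    (g.toOrderHom i : ℕ) = g.toOrderHom 0 + i := by
  induction i using Fin.induction with
  | zero => rfl
  | succ i ih => rw [hg i, ih, Fin.val_succ, Fin.val_castSucc, Nat.add_assoc]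

lemma IsInert.ext {g g' : n ⟶ m} (hg : IsInert g) (hg' : IsInert g')
    (h : g.toOrderHom 0 = g'.toOrderHom 0) : g = g' := by
  refine hom_ext_of_val fun i ↦ ?_
  rw [hg.val_apply, hg'.val_apply, h]

lemma IsActive.eq_and_eq_of_comp_eq_comp {e e' : n ⟶ q} {g g' : q ⟶ m}
    (he : IsActive e) (he' : IsActive e') (hg : IsInert g) (hg' : IsInert g')
    (h : e ≫ g = e' ≫ g') : e = e' ∧ g = g' := by
  have hgg' : g = g' := hg.ext hg' <| by
    simpa only [comp_toOrderHom_apply, he.1, he'.1] using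
      congr_arg (fun f : n ⟶ m ↦ f.toOrderHom 0) h
  subst hgg'
  refine ⟨hom_ext_of_val fun i ↦ ?_, rfl⟩
  have hi := congr_arg (fun f : n ⟶ m ↦ (f.toOrderHom i : ℕ)) h
  rw [comp_toOrderHom_apply, comp_toOrderHom_apply, hg.val_apply (e.toOrderHom i),
    hg.val_apply (e'.toOrderHom i)] at hi
  omega

end ActiveInert

namespace SimplexCategory

variable {n m q : SimplexCategory} (f : n ⟶ m)

def activeObj : SimplexCategory :=
  ⦋(f.toOrderHom (Fin.last n.len) : ℕ) - f.toOrderHom 0⦌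

def activePart : n ⟶ activeObj f :=
  mkHom
    { toFun i := ⟨f.toOrderHom i - f.toOrderHom 0, by
        have := f.toOrderHom.monotone (Fin.le_last i)
        omega⟩
      monotone' i j hij := by
        have := f.toOrderHom.monotone hij
        simp only [Fin.mk_le_mk]
        omega }

def inertPart : activeObj f ⟶ m :=
  subinterval (f.toOrderHom 0) _ (by
    have := f.toOrderHom.monotone (Fin.zero_le (Fin.last n.len))
    have := (f.toOrderHom (Fin.last n.len)).is_le
    omega)

lemma val_activePart_apply (i : Fin (n.len + 1)) :
    ((activePart f).toOrderHom i : ℕ) = f.toOrderHom i - f.toOrderHom 0 := rfl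

lemma val_inertPart_apply (j : Fin ((activeObj f).len + 1)) :
    ((inertPart f).toOrderHom j : ℕ) = j + f.toOrderHom 0 := rfl

lemma isActive_activePart : IsActive (activePart f) := by
  constructor <;> apply Fin.ext <;> rw [val_activePart_apply] <;> simp [activeObj]

lemma isInert_inertPart : IsInert (inertPart f) := by
  intro i
  simp only [val_inertPart_apply, Fin.val_succ, Fin.val_castSucc]
  omega

lemma activePart_comp_inertPart : activePart f ≫ inertPart f = f := by
  refine hom_ext_of_val fun i ↦ ?_
  have := f.toOrderHom.monotone (Fin.zero_le i)
  simp only [comp_toOrderHom_apply, val_inertPart_apply, val_activePart_apply]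
  omega

lemma activeObj_eq_of_comp_eq {e : n ⟶ q} {g : q ⟶ m} (he : IsActive e) (hg : IsInert g)
    (h : e ≫ g = f) : activeObj f = q := by
  subst h
  ext
  change _ - _ = _
  rw [comp_toOrderHom_apply, comp_toOrderHom_apply, he.1, he.2, hg.val_apply, Fin.val_last]
  omega

end SimplexCategory

namespace DeltaInert

def mk (q : SimplexCategory) : DeltaInert := WideSubcategory.mk q

def homMk {a b : SimplexCategory} (g : a ⟶ b) (hg : IsInert g) : mk a ⟶ mk b := ⟨g, hg⟩

@[simp]
lemma homMk_id (a : SimplexCategory) : homMk (𝟙 a) (IsInert.id a) = 𝟙 (mk a) := rfl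

lemma homMk_comp {a b c : SimplexCategory} {g : a ⟶ b} {g' : b ⟶ c} (hg : IsInert g)
    (hg' : IsInert g') (hgg' : IsInert (g ≫ g')) :
    homMk (g ≫ g') hgg' = homMk g hg ≫ homMk g' hg' := rfl

end DeltaInert

namespace ActiveExtension

open Opposite SimplexCategory

variable {A : DeltaInertᵒᵖ ⥤ Type u}

variable (A) in
/-- The simplices of `j_! A`: an active `α : ⦋n⦌ ⟶ ⦋q⦌` is the tuple of lengths
`ℓ_i = α i - α (i - 1)` summing to `q`, so `Elem A n ≃ Σ_{ℓ_1, …, ℓ_n} A_{ℓ_1 + ⋯ + ℓ_n}`. -/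
structure Elem (n : SimplexCategory) : Type u where
  obj : SimplexCategory
  hom : n ⟶ obj
  isActive : IsActive hom
  elem : A.obj (op (DeltaInert.mk obj))

def Elem.pull {n n' : SimplexCategory} (β : n' ⟶ n) (x : Elem A n) : Elem A n' :=
  ⟨activeObj (β ≫ x.hom), activePart _, isActive_activePart _,
    A.map (DeltaInert.homMk (inertPart _) (isInert_inertPart _)).op x.elem⟩

lemma Elem.pull_mk_eq_mk_iff {n n' q q' : SimplexCategory} {β : n' ⟶ n} {α : n ⟶ q}
    {hα : IsActive α} {a : A.obj (op (DeltaInert.mk q))} {e : n' ⟶ q'} {he : IsActive e}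
    {a' : A.obj (op (DeltaInert.mk q'))} :
    pull β ⟨q, α, hα, a⟩ = ⟨q', e, he, a'⟩ ↔
      ∃ (g : q' ⟶ q) (hg : IsInert g), e ≫ g = β ≫ α ∧ a' = A.map (DeltaInert.homMk g hg).op a := by
  constructor
  · intro h
    cases h
    exact ⟨_, isInert_inertPart _, activePart_comp_inertPart _, rfl⟩
  · rintro ⟨g, hg, hfac, rfl⟩
    obtain rfl := activeObj_eq_of_comp_eq (β ≫ α) he hg hfac
    obtain ⟨rfl, rfl⟩ := (isActive_activePart _).eq_and_eq_of_comp_eq_comp he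
      (isInert_inertPart _) hg ((activePart_comp_inertPart _).trans hfac.symm)
    rfl

lemma Elem.pull_of_isActive {n n' q : SimplexCategory} {β : n' ⟶ n} (hβ : IsActive β)
    {α : n ⟶ q} (hα : IsActive α) (a : A.obj (op (DeltaInert.mk q))) :
    pull β ⟨q, α, hα, a⟩ = ⟨q, β ≫ α, hβ.comp hα, a⟩ :=
  pull_mk_eq_mk_iff.2 ⟨𝟙 q, IsInert.id q, Category.comp_id _, by simp⟩

lemma Elem.pull_id {n : SimplexCategory} (x : Elem A n) : x.pull (𝟙 n) = x := by
  obtain ⟨q, α, hα, a⟩ := x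
  simp only [pull_of_isActive (IsActive.id n), Category.id_comp]

lemma Elem.pull_comp {n n' n'' : SimplexCategory} (β : n' ⟶ n) (β' : n'' ⟶ n')
    (x : Elem A n) : x.pull (β' ≫ β) = (x.pull β).pull β' := by
  obtain ⟨q, α, hα, a⟩ := x
  generalize hy : pull β ⟨q, α, hα, a⟩ = y
  obtain ⟨q₁, e₁, he₁, a₁⟩ := y
  obtain ⟨g₁, hg₁, hfac₁, rfl⟩ := pull_mk_eq_mk_iff.1 hy
  generalize hz : pull β' ⟨q₁, e₁, he₁, _⟩ = z
  obtain ⟨q₂, e₂, he₂, a₂⟩ := z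
  obtain ⟨g₂, hg₂, hfac₂, rfl⟩ := pull_mk_eq_mk_iff.1 hz
  refine pull_mk_eq_mk_iff.2 ⟨g₂ ≫ g₁, hg₂.comp hg₁, ?_, ?_⟩
  · rw [← Category.assoc, hfac₂, Category.assoc, hfac₁, Category.assoc]
  · rw [DeltaInert.homMk_comp hg₂ hg₁, op_comp, Functor.map_comp_apply]

end ActiveExtension

open ActiveExtension in
def ActiveExtension (A : DeltaInertᵒᵖ ⥤ Type u) : SSet.{u} where
  obj n := Elem A n.unop
  map β := TypeCat.ofHom (Elem.pull β.unop)
  map_id _ := by ext x; exact x.pull_id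
  map_comp _ _ := by ext x; exact x.pull_comp _ _

namespace ActiveExtension

open Opposite SimplexCategory

variable (A : DeltaInertᵒᵖ ⥤ Type u)

def unit : A ⟶ inertInclusion.op ⋙ ActiveExtension A where
  app ℓ := TypeCat.ofHom fun a ↦ (⟨ℓ.unop.obj, 𝟙 _, IsActive.id _, a⟩ : Elem A ℓ.unop.obj)
  naturality ℓ ℓ' h := by
    ext a
    exact Eq.symm (Elem.pull_mk_eq_mk_iff.2 ⟨h.unop.1, h.unop.2, rfl, rfl⟩)

def costructuredArrowMk {Y : SimplexCategoryᵒᵖ} {q : SimplexCategory} (α : Y.unop ⟶ q) :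
    CostructuredArrow inertInclusion.op Y :=
  CostructuredArrow.mk (Y := op (DeltaInert.mk q))
    (α.op : inertInclusion.op.obj (op (DeltaInert.mk q)) ⟶ Y)

/-- The leg at `costructuredArrowMk x.hom` sends `x.elem` to `x`, and the leg at any other
`f : Y.unop ⟶ q` factors through the one at `activePart f`. -/
def isPointwiseLeftKanExtension :
    (Functor.LeftExtension.mk _ (unit A)).IsPointwiseLeftKanExtension := fun Y ↦
  { desc s := TypeCat.ofHom fun x ↦ s.ι.app (costructuredArrowMk x.hom) x.elem
    fac s c := by
      ext a
      exact types_congr_hom (s.w (CostructuredArrow.homMk (f := c)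
        (f' := costructuredArrowMk (activePart (c.hom.unop ≫ 𝟙 _)))
        (DeltaInert.homMk (inertPart _) (isInert_inertPart _)).op
        (Quiver.Hom.unop_inj ((activePart_comp_inertPart _).trans (Category.comp_id _))))) a
    uniq s m hm := by
      ext ⟨q, α, hα, a⟩
      have hx : (⟨q, α, hα, a⟩ : Elem A Y.unop) =
          ((Functor.LeftExtension.mk _ (unit A)).coconeAt Y).ι.app (costructuredArrowMk α) a := by
        change _ = Elem.pull α ⟨q, 𝟙 q, IsActive.id q, a⟩
        simp only [Elem.pull_of_isActive hα, Category.comp_id]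
      exact (congrArg (fun x ↦ m x) hx).trans (types_congr_hom (hm (costructuredArrowMk α)) a) }

instance : (ActiveExtension A).IsLeftKanExtension (unit A) :=
  (isPointwiseLeftKanExtension A).isLeftKanExtension

lemma isDecomposition : IsDecomposition (ActiveExtension A) := by
  intro n m k p α ι θ φ hα _ _ hφ hpo
  refine ⟨fun x ↦ ?_, ?_⟩
  · dsimp only
    rw [← Functor.map_comp_apply, ← Functor.map_comp_apply, ← op_comp, ← op_comp, hpo.w]
  rintro ⟨qk, χ, hχ, b⟩ ⟨qm, ρ, hρ, c⟩ hbc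
  change Elem.pull ι ⟨qk, χ, hχ, b⟩ = Elem.pull α ⟨qm, ρ, hρ, c⟩ at hbc
  change ∃! x : Elem A p, x.pull φ = ⟨qk, χ, hχ, b⟩ ∧ x.pull θ = ⟨qm, ρ, hρ, c⟩
  rw [Elem.pull_of_isActive hα, Elem.pull_mk_eq_mk_iff] at hbc
  obtain ⟨g, hg, hfac, rfl⟩ := hbc
  obtain ⟨ψ, hθψ, hφψ⟩ : ∃ ψ : p ⟶ qk, θ ≫ ψ = ρ ≫ g ∧ φ ≫ ψ = χ :=
    ⟨hpo.desc _ _ ((Category.assoc _ _ _).symm.trans hfac), hpo.inl_desc .., hpo.inr_desc ..⟩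
  have hψ : IsActive ψ := hφ.of_comp (hφψ ▸ hχ)
  refine ⟨⟨qk, ψ, hψ, b⟩, ⟨?_, ?_⟩, ?_⟩
  · subst hφψ
    exact Elem.pull_of_isActive hφ hψ b
  · exact Elem.pull_mk_eq_mk_iff.2 ⟨g, hg, hθψ.symm, rfl⟩
  rintro ⟨q', ψ', hψ', b'⟩ ⟨hb', hc'⟩
  rw [Elem.pull_of_isActive hφ] at hb'
  -- this replaces `χ` by `φ ≫ ψ'` and `b` by `b'`
  cases hb'
  obtain ⟨g', hg', hfac', -⟩ := Elem.pull_mk_eq_mk_iff.1 hc'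
  have hgg' : g' = g := by
    refine ((hα.comp hρ).eq_and_eq_of_comp_eq_comp (hα.comp hρ) hg' hg ?_).2
    rw [hfac, Category.assoc, hfac', ← Category.assoc, hpo.w, Category.assoc]
  obtain rfl : ψ' = ψ := hpo.hom_ext (by rw [← hfac', hgg', hθψ]) hφψ.symm
  rfl

end ActiveExtension

/-- For every outer face complex `A : Δ_inertᵒᵖ ⥤ Set`, the simplicial set `j_! A`
obtained by left Kan extension along (the opposite of) the inclusion
`j : Δ_inert → Δ` is a decomposition space. -/
theorem freeDecompositionSpace (A : DeltaInertᵒᵖ ⥤ Type u) :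
    IsDecomposition (inertInclusion.op.leftKanExtension A) :=
  (ActiveExtension.isDecomposition A).of_iso <|
    Functor.leftKanExtensionUnique _ (inertInclusion.op.leftKanExtensionUnit A) _
      (ActiveExtension.unit A)
end
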